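/- Let X be a càdlàg function without upward jumps with X_0 = x and suppose y_x(∞) := lim_{t→∞} y(t) < ∞ where y solves y' = 1 - δ(y), y(0) = x for measurable δ : [x,∞) → [0,1) with unique ODE solution. If V is the natural tax process with rate δ, then V̄_t = y(X̄_t - x) < y_x(∞) for all t; in particular, for any a ≥ y_x(∞), the first passage time τ_a^+ = inf{t ≥ 0 : V_t > a} is infinite. -/

import Mathlib

/-!
Because `X` jumps only downwards, its running maximum `F = X̄` is continuous, so pushing the
Stieltjes measure `dF` forward along `F` gives Lebesgue measure. The tax paid on `(s, t]` lies
between `0` and `F t - F s`; this yields `V̄ = F - A` for the cumulative tax `A` and shows that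
`V̄` only moves when `F` does, i.e. `V̄ = z (F - x)` for a monotone `z`. The change of variables
`v = F s` turns the equation defining `V` into `z u = x + ∫₀ᵘ (1 - δ (z w)) dw`. Continuing `z` by
a time shift of `y` produces a global solution, so uniqueness gives `z = y` as long as `z` stays
below `y_x(∞)`, and an intermediate value argument shows that it always does. Finally `y` is
strictly increasing, so it stays strictly below its limit.
-/

open MeasureTheory Set Filter

/-- Running maximum of a path on `[0, t]`. -/
noncomputable def runMax (X : ℝ → ℝ) (t : ℝ) : ℝ := sSup (X '' Set.Icc 0 t)

open Function Topology

section RunningMaximum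

variable {X : ℝ → ℝ}

theorem runMax_zero : runMax X 0 = X 0 := by
  rw [runMax, Icc_self, image_singleton, csSup_singleton]

theorem le_runMax {s t : ℝ} (hX : BddAbove (X '' Icc 0 t)) (hs : s ∈ Icc 0 t) :
    X s ≤ runMax X t :=
  le_csSup hX (mem_image_of_mem X hs)

theorem runMax_le {t B : ℝ} (ht : 0 ≤ t) (h : ∀ s ∈ Icc 0 t, X s ≤ B) : runMax X t ≤ B :=
  csSup_le ((nonempty_Icc.2 ht).image X) (forall_mem_image.2 h)

theorem monotoneOn_runMax (hX : ∀ T, BddAbove (X '' Icc 0 T)) : MonotoneOn (runMax X) (Ici 0) :=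
  fun _ hs _ _ hst => runMax_le hs fun _ hr => le_runMax (hX _) ⟨hr.1, hr.2.trans hst⟩

theorem runMax_sub_eq {V A : ℝ → ℝ} {t : ℝ} (ht : 0 ≤ t) (hX : ∀ T, BddAbove (X '' Icc 0 T))
    (hV : ∀ r ∈ Icc 0 t, V r = X r - A r)
    (hA : ∀ r ∈ Icc 0 t, A t - A r ∈ Icc 0 (runMax X t - runMax X r)) :
    runMax V t = runMax X t - A t := by
  have hVle : ∀ r ∈ Icc 0 t, V r ≤ runMax X t - A t := fun r hr => by
    linarith [hV r hr, (hA r hr).2, le_runMax (hX r) ⟨hr.1, le_rfl⟩]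
  refine le_antisymm (runMax_le ht hVle) ?_
  suffices runMax X t ≤ runMax V t + A t by linarith
  exact runMax_le ht fun r hr => by
    linarith [hV r hr, (hA r hr).1, le_runMax ⟨_, forall_mem_image.2 hVle⟩ hr]

theorem bddAbove_image_Icc_of_cadlag (hrc : ∀ t ≥ (0:ℝ), ContinuousWithinAt X (Ici t) t)
    (hll : ∀ t > (0:ℝ), ∃ l, Tendsto X (𝓝[<] t) (𝓝 l)) (T : ℝ) :
    BddAbove (X '' Icc 0 T) := by
  refine isCompact_Icc.induction_on (p := fun s => BddAbove (X '' s)) (by simp)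
    (fun s t hst ht => ht.mono (image_mono hst))
    (fun s t hs ht => by simpa only [image_union] using hs.union ht) fun t ht => ?_
  have hright : ∀ᶠ u in 𝓝[≥] t, X u ≤ X t + 1 :=
    (hrc t ht.1).eventually (eventually_le_nhds (lt_add_one _))
  obtain ⟨B, hB⟩ : ∃ B, ∀ᶠ u in 𝓝[Icc 0 T] t, X u ≤ B := by
    rcases ht.1.eq_or_lt with rfl | ht0
    · exact ⟨_, nhdsWithin_mono _ Icc_subset_Ici_self hright⟩
    · obtain ⟨l, hl⟩ := hll t ht0
      have hleft : ∀ᶠ u in 𝓝[<] t, X u ≤ max (l + 1) (X t + 1) :=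
        (hl.eventually (eventually_le_nhds (lt_add_one _))).mono fun u hu =>
          hu.trans (le_max_left _ _)
      refine ⟨max (l + 1) (X t + 1), nhdsWithin_le_nhds ?_⟩
      rw [← nhdsLT_sup_nhdsGE]
      exact ⟨hleft, hright.mono fun u hu => hu.trans (le_max_right _ _)⟩
  exact ⟨_, hB, B, forall_mem_image.2 fun u hu => hu⟩

end RunningMaximum

theorem StieltjesFunction.measureReal_Ioc (F : StieltjesFunction ℝ) {a b : ℝ} (hab : a ≤ b) :
    F.measure.real (Ioc a b) = F b - F a := by
  rw [measureReal_def, F.measure_Ioc, ENNReal.toReal_ofReal (sub_nonneg.2 (F.mono hab))]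

theorem StieltjesFunction.measure_Ioc_ne_top (F : StieltjesFunction ℝ) (a b : ℝ) :
    F.measure (Ioc a b) ≠ ⊤ := by
  simp [F.measure_Ioc]

theorem StieltjesFunction.continuousOn_Ici_of_eq_runMax {X : ℝ → ℝ} (F : StieltjesFunction ℝ)
    (hF : ∀ t ≥ (0:ℝ), F t = runMax X t) (hX : ∀ T, BddAbove (X '' Icc 0 T))
    (hll : ∀ t > (0:ℝ), ∃ l, Tendsto X (𝓝[<] t) (𝓝 l))
    (hnuj : ∀ t > (0:ℝ), ∀ l, Tendsto X (𝓝[<] t) (𝓝 l) → X t ≤ l) :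
    ContinuousOn F (Ici 0) := by
  intro t ht
  rcases (mem_Ici.1 ht).eq_or_lt with rfl | ht0
  · exact F.right_continuous 0
  refine (F.mono.continuousAt_iff_leftLim_eq_rightLim.2 ?_).continuousWithinAt
  rw [F.rightLim_eq]
  refine le_antisymm (F.mono.leftLim_le le_rfl) ?_
  have hXle : ∀ s ∈ Ico 0 t, X s ≤ leftLim F t := fun s hs =>
    (le_runMax (hX s) ⟨hs.1, le_rfl⟩).trans ((hF s hs.1).symm ▸ F.mono.le_leftLim hs.2)
  obtain ⟨l, hl⟩ := hll t ht0
  have hXt : X t ≤ leftLim F t := by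
    refine (hnuj t ht0 l hl).trans (le_of_tendsto hl ?_)
    filter_upwards [Ioo_mem_nhdsLT ht0] with s hs using hXle s ⟨hs.1.le, hs.2⟩
  rw [hF t ht0.le]
  exact runMax_le ht0.le fun s hs => hs.2.eq_or_lt.elim (· ▸ hXt) fun h => hXle s ⟨hs.1, h⟩

theorem StieltjesFunction.map_restrict_Ioc (F : StieltjesFunction ℝ) {a b : ℝ} (hab : a ≤ b)
    (hF : ContinuousOn F (Icc a b)) :
    (F.measure.restrict (Ioc a b)).map F = volume.restrict (Ioc (F a) (F b)) := by
  have hFm : Measurable F := F.mono.measurable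
  have : IsFiniteMeasure (F.measure.restrict (Ioc a b)) :=
    isFiniteMeasure_restrict.2 (by simp [F.measure_Ioc])
  refine Measure.ext_of_Iic _ _ fun v => ?_
  rw [Measure.map_apply hFm measurableSet_Iic, Measure.restrict_apply (hFm measurableSet_Iic),
    Measure.restrict_apply measurableSet_Iic]
  rcases lt_or_ge v (F a) with hv | hv
  · have h1 : F ⁻¹' Iic v ∩ Ioc a b = ∅ :=
      eq_empty_of_forall_notMem fun s hs => (hv.trans_le (F.mono hs.2.1.le)).not_ge hs.1
    have h2 : Iic v ∩ Ioc (F a) (F b) = ∅ :=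
      eq_empty_of_forall_notMem fun s hs => (hv.trans hs.2.1).not_ge hs.1
    rw [h1, h2, measure_empty, measure_empty]
  set w := min v (F b)
  have hK : IsCompact (Icc a b ∩ F ⁻¹' Iic w) :=
    isCompact_Icc.of_isClosed_subset (hF.preimage_isClosed_of_isClosed isClosed_Icc isClosed_Iic)
      inter_subset_left
  obtain ⟨c, ⟨hc, hcw⟩, hcmax⟩ := hK.exists_isGreatest
    ⟨a, left_mem_Icc.2 hab, le_min hv (F.mono hab)⟩
  have hFc : F c = w := by
    obtain ⟨c₀, hc₀, hFc₀⟩ :=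
      intermediate_value_Icc hab hF ⟨le_min hv (F.mono hab), min_le_right _ _⟩
    exact le_antisymm hcw (hFc₀.symm.trans_le (F.mono (hcmax ⟨hc₀, hFc₀.le⟩)))
  have h1 : F ⁻¹' Iic v ∩ Ioc a b = Ioc a c := by
    ext s
    refine ⟨fun hs => ⟨hs.2.1, hcmax ⟨Ioc_subset_Icc_self hs.2, le_min hs.1 (F.mono hs.2.2)⟩⟩,
      fun hs => ⟨(F.mono hs.2).trans (hFc.trans_le (min_le_left _ _)), hs.1, hs.2.trans hc.2⟩⟩
  have h2 : Iic v ∩ Ioc (F a) (F b) = Ioc (F a) w := by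
    ext s; simp only [mem_inter_iff, mem_Iic, mem_Ioc, w, le_min_iff]; tauto
  rw [h1, h2, F.measure_Ioc, Real.volume_Ioc, hFc]

theorem StieltjesFunction.setIntegral_comp (F : StieltjesFunction ℝ) {a b : ℝ} (hab : a ≤ b)
    (hF : ContinuousOn F (Icc a b)) {g : ℝ → ℝ} (hg : Measurable g) :
    ∫ s in Ioc a b, g (F s) ∂F.measure = ∫ v in Ioc (F a) (F b), g v := by
  rw [← F.map_restrict_Ioc hab hF,
    integral_map F.mono.measurable.aemeasurable hg.aestronglyMeasurable]

theorem setIntegral_ge_of_const_le_of_nonpos {α : Type*} [MeasurableSpace α] {μ : Measure α}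
    {s : Set α} {f : α → ℝ} {c : ℝ} (hc : c ≤ 0) (hs : MeasurableSet s) (hμs : μ s ≠ ⊤)
    (hf : ∀ a ∈ s, c ≤ f a) : μ.real s • c ≤ ∫ a in s, f a ∂μ := by
  by_cases hfi : IntegrableOn f s μ
  · exact setIntegral_ge_of_const_le hs hμs hf hfi
  · rw [integral_undef hfi]
    exact smul_nonpos_of_nonneg_of_nonpos measureReal_nonneg hc

section NaturalTax

variable (F : StieltjesFunction ℝ) {δ : ℝ → ℝ}

theorem bddAbove_image_Icc_of_eq_sub_integral {X V : ℝ → ℝ} (hX : ∀ T, BddAbove (X '' Icc 0 T))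
    (hδ : ∀ z ≥ X 0, 0 ≤ δ z)
    (hV : ∀ t ≥ (0:ℝ), V t = X t - ∫ s in Ioc 0 t, δ (runMax V s) ∂F.measure) (T : ℝ) :
    BddAbove (V '' Icc 0 T) := by
  have hV0 : V 0 = X 0 := by simpa using hV 0 le_rfl
  have hc : ∀ s ≥ (0:ℝ), min 0 (δ 0) ≤ δ (runMax V s) := by
    intro s hs
    by_cases hb : BddAbove (V '' Icc 0 s)
    · exact (min_le_left _ _).trans (hδ _ (hV0 ▸ le_runMax hb ⟨le_rfl, hs⟩))
    -- otherwise `runMax V s` is the junk value `sSup` of a set unbounded above, namely `0`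
    · rw [runMax, Real.sSup_of_not_bddAbove hb]
      exact min_le_right _ _
  refine ⟨runMax X T - (F T - F 0) * min 0 (δ 0), forall_mem_image.2 fun r hr => ?_⟩
  have hint := setIntegral_ge_of_const_le_of_nonpos (min_le_left 0 (δ 0)) measurableSet_Ioc
    (F.measure_Ioc_ne_top 0 r) fun s hs => hc s hs.1.le
  rw [F.measureReal_Ioc hr.1, smul_eq_mul] at hint
  have hmono : (F T - F 0) * min 0 (δ 0) ≤ (F r - F 0) * min 0 (δ 0) :=
    mul_le_mul_of_nonpos_right (by linarith [F.mono hr.2]) (min_le_left _ _)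
  rw [hV r hr.1]
  linarith [le_runMax (hX T) hr]

theorem intervalIntegrable_comp_of_monotoneOn {μ : Measure ℝ} {x : ℝ} (hδmeas : Measurable δ)
    (hδ : ∀ z ≥ x, 0 ≤ δ z ∧ δ z < 1) {g : ℝ → ℝ} (hg : MonotoneOn g (Ici 0)) (hg0 : x ≤ g 0)
    {b : ℝ} (hb : 0 ≤ b) (hμ : μ (Ioc 0 b) ≠ ⊤) :
    IntervalIntegrable (fun s => δ (g s)) μ 0 b := by
  have : IsFiniteMeasure (μ.restrict (Ioc 0 b)) := isFiniteMeasure_restrict.2 hμ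
  have hmeas : AEStronglyMeasurable (fun s => δ (g s)) (μ.restrict (Ioc 0 b)) :=
    (hδmeas.comp_aemeasurable (aemeasurable_restrict_of_monotoneOn measurableSet_Ioc
      (hg.mono (Ioc_subset_Ioi_self.trans Ioi_subset_Ici_self)))).aestronglyMeasurable
  refine (intervalIntegrable_iff_integrableOn_Ioc_of_le hb).2 <|
    Integrable.of_bound hmeas 1 (ae_restrict_of_forall_mem measurableSet_Ioc fun s hs => ?_)
  have := hδ _ (hg0.trans (hg self_mem_Ici hs.1.le hs.1.le))
  rw [Real.norm_eq_abs, abs_le]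
  constructor <;> linarith

theorem integral_Ioc_sub_integral_Ioc_mem_Icc {x : ℝ} (hδmeas : Measurable δ)
    (hδ : ∀ z ≥ x, 0 ≤ δ z ∧ δ z < 1) {g : ℝ → ℝ} (hg : MonotoneOn g (Ici 0)) (hg0 : x ≤ g 0)
    {a b : ℝ} (ha : 0 ≤ a) (hab : a ≤ b) :
    (∫ s in Ioc 0 b, δ (g s) ∂F.measure) - ∫ s in Ioc 0 a, δ (g s) ∂F.measure ∈
      Icc 0 (F b - F a) := by
  have hδg : ∀ s ∈ Ioc a b, 0 ≤ δ (g s) ∧ δ (g s) < 1 := fun s hs =>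
    hδ _ (hg0.trans (hg self_mem_Ici (ha.trans hs.1.le) (ha.trans hs.1.le)))
  have hint := intervalIntegrable_comp_of_monotoneOn hδmeas hδ hg hg0 (ha.trans hab)
    (F.measure_Ioc_ne_top 0 b)
  rw [← intervalIntegral.integral_of_le (ha.trans hab), ← intervalIntegral.integral_of_le ha,
    intervalIntegral.integral_interval_sub_left hint (hint.mono_set (uIcc_subset_uIcc_left
      (by simp [uIcc_of_le (ha.trans hab), ha, hab]))), intervalIntegral.integral_of_le hab]
  have hbound := norm_setIntegral_le_of_norm_le_const (F.measure_Ioc_ne_top a b).lt_top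
    (f := fun s => δ (g s)) (C := 1) fun s hs => by
      rw [Real.norm_eq_abs, abs_le]
      constructor <;> linarith [hδg s hs]
  rw [F.measureReal_Ioc hab, one_mul, Real.norm_eq_abs] at hbound
  exact ⟨setIntegral_nonneg measurableSet_Ioc fun s hs => (hδg s hs).1,
    (le_abs_self _).trans hbound⟩

end NaturalTax

theorem intervalIntegrable_of_forall_lt {f : ℝ → ℝ} {a b C : ℝ} (hab : a < b)
    (hC : ∀ s ∈ Ioc a b, ‖f s‖ ≤ C) (hf : ∀ c ∈ Ioo a b, IntervalIntegrable f volume a c) :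
    IntervalIntegrable f volume a b := by
  obtain ⟨u, -, hu, hlim⟩ := exists_seq_strictMono_tendsto' hab
  have hmeas : AEStronglyMeasurable f (volume.restrict (Ioc a b)) :=
    (aecover_Ioc_of_Ioc tendsto_const_nhds hlim).aestronglyMeasurable fun n =>
      ((intervalIntegrable_iff_integrableOn_Ioc_of_le (hu n).1.le).1
        (hf _ (hu n))).aestronglyMeasurable.mono_measure
        (Measure.restrict_mono subset_rfl Measure.restrict_le_self)
  have : IsFiniteMeasure (volume.restrict (Ioc a b)) := isFiniteMeasure_restrict.2 (by simp)
  exact (intervalIntegrable_iff_integrableOn_Ioc_of_le hab.le).2 <|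
    Integrable.of_bound hmeas C (ae_restrict_of_forall_mem measurableSet_Ioc hC)

def IsTaxODESolution (δ : ℝ → ℝ) (x : ℝ) (y : ℝ → ℝ) : Prop :=
  ∀ t ≥ (0:ℝ), x ≤ y t ∧ y t = x + ∫ s in (0:ℝ)..t, (1 - δ (y s))

section ODE

variable {δ y z : ℝ → ℝ} {x U : ℝ}

theorem IsTaxODESolution.intervalIntegrable (hy : IsTaxODESolution δ x y)
    (hδ : ∀ z ≥ x, 0 ≤ δ z ∧ δ z < 1) {t : ℝ} (ht : 0 ≤ t) :
    IntervalIntegrable (fun s => 1 - δ (y s)) volume 0 t := by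
  set f := fun s => 1 - δ (y s)
  have hf : ∀ s ≥ (0:ℝ), ‖f s‖ ≤ 1 := fun s hs => by
    have := hδ _ (hy s hs).1
    rw [Real.norm_eq_abs, abs_le]
    constructor <;> linarith
  by_contra hbad
  set B := {s | 0 ≤ s ∧ ¬ IntervalIntegrable f volume 0 s}
  have hBne : B.Nonempty := ⟨t, ht, hbad⟩
  have hBbdd : BddBelow B := ⟨0, fun s hs => hs.1⟩
  have hτ0 : 0 ≤ sInf B := le_csInf hBne fun s hs => hs.1
  -- beyond `sInf B` the integral defining `y` is undefined, so `y` sits at its junk value `x`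
  have hyx : ∀ s > sInf B, y s = x := by
    intro s hs
    obtain ⟨b, hb, hbs⟩ := exists_lt_of_csInf_lt hBne hs
    have hs' : ¬ IntervalIntegrable f volume 0 s := fun h =>
      hb.2 (h.mono_set (uIcc_subset_uIcc_left (mem_uIcc_of_le hb.1 hbs.le)))
    rw [(hy s (hτ0.trans hs.le)).2, intervalIntegral.integral_undef hs', add_zero]
  have hτ : IntervalIntegrable f volume 0 (sInf B) := by
    rcases hτ0.eq_or_lt with h | h
    · exact h ▸ .refl
    · exact intervalIntegrable_of_forall_lt h (fun s hs => hf s hs.1.le) fun c hc =>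
        not_not.1 fun h' => notMem_of_lt_csInf hc.2 hBbdd ⟨hc.1.le, h'⟩
  refine hbad (hτ.trans ((intervalIntegrable_const (c := 1 - δ x)).congr fun s hs => ?_))
  rw [uIoc_of_le (csInf_le hBbdd ⟨ht, hbad⟩)] at hs
  simp only [f, hyx s hs.1]

theorem continuousOn_of_eq_add_integral (hU : 0 ≤ U)
    (hz : ∀ u ∈ Icc 0 U, z u = x + ∫ s in (0:ℝ)..u, (1 - δ (z s)))
    (hint : IntervalIntegrable (fun s => 1 - δ (z s)) volume 0 U) : ContinuousOn z (Icc 0 U) := by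
  have := intervalIntegral.continuousOn_primitive_interval' hint left_mem_uIcc
  rw [uIcc_of_le hU] at this
  exact (continuousOn_const.add this).congr hz

theorem IsTaxODESolution.sub_eq_integral (hy : IsTaxODESolution δ x y)
    (hδ : ∀ z ≥ x, 0 ≤ δ z ∧ δ z < 1) {a b : ℝ} (ha : 0 ≤ a) (hab : a ≤ b) :
    y b - y a = ∫ s in a..b, (1 - δ (y s)) := by
  rw [(hy b (ha.trans hab)).2, (hy a ha).2, ← intervalIntegral.integral_interval_sub_left
    (hy.intervalIntegrable hδ (ha.trans hab)) (hy.intervalIntegrable hδ ha)]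
  ring

theorem IsTaxODESolution.strictMonoOn (hy : IsTaxODESolution δ x y)
    (hδ : ∀ z ≥ x, 0 ≤ δ z ∧ δ z < 1) : StrictMonoOn y (Ici 0) := by
  intro a ha b hb hab
  have hpos : 0 < ∫ s in a..b, (1 - δ (y s)) :=
    intervalIntegral.intervalIntegral_pos_of_pos_on
      ((hy.intervalIntegrable hδ hb).mono_set (uIcc_subset_uIcc_right (mem_uIcc_of_le ha hab.le)))
      (fun s hs => sub_pos.2 (hδ _ (hy s (ha.trans hs.1.le)).1).2) hab
  linarith [hy.sub_eq_integral hδ ha hab.le]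

theorem IsTaxODESolution.lt_of_tendsto (hy : IsTaxODESolution δ x y)
    (hδ : ∀ z ≥ x, 0 ≤ δ z ∧ δ z < 1) {yinf : ℝ} (hyinf : Tendsto y atTop (𝓝 yinf)) {t : ℝ}
    (ht : 0 ≤ t) : y t < yinf := by
  have hmono := hy.strictMonoOn hδ
  refine (hmono ht (ht.trans (le_add_of_nonneg_right zero_le_one)) (lt_add_one t)).trans_le <|
    ge_of_tendsto hyinf ?_
  filter_upwards [eventually_ge_atTop (t + 1)] with s hs
  exact hmono.monotoneOn (mem_Ici.2 (by linarith)) (mem_Ici.2 (by linarith)) hs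

theorem IsTaxODESolution.exists_eq (hy : IsTaxODESolution δ x y)
    (hδ : ∀ z ≥ x, 0 ≤ δ z ∧ δ z < 1) {yinf : ℝ} (hyinf : Tendsto y atTop (𝓝 yinf)) {v : ℝ}
    (hxv : x ≤ v) (hv : v < yinf) : ∃ c ≥ 0, y c = v := by
  obtain ⟨N, hN, hvN⟩ :=
    ((eventually_ge_atTop 0).and (hyinf.eventually (eventually_gt_nhds hv))).exists
  have hy0 : y 0 = x := by simpa using (hy 0 le_rfl).2
  obtain ⟨c, hc, hyc⟩ := intermediate_value_Icc hN (continuousOn_of_eq_add_integral hN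
    (fun u hu => (hy u hu.1).2) (hy.intervalIntegrable hδ hN)) ⟨hy0 ▸ hxv, hvN.le⟩
  exact ⟨c, hc.1, hyc⟩

theorem IsTaxODESolution.comp_add_right (hy : IsTaxODESolution δ x y)
    (hδ : ∀ z ≥ x, 0 ≤ δ z ∧ δ z < 1) {c : ℝ} (hc : 0 ≤ c) :
    IsTaxODESolution δ (y c) (fun s => y (s + c)) := by
  intro s hs
  refine ⟨(hy.strictMonoOn hδ).monotoneOn hc (mem_Ici.2 (by linarith)) (by linarith), ?_⟩
  rw [intervalIntegral.integral_comp_add_right (fun r => 1 - δ (y r)), zero_add,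
    ← hy.sub_eq_integral hδ hc (by linarith)]
  ring

theorem intervalIntegrable_one_sub_comp_of_monotone (hδmeas : Measurable δ)
    (hδ : ∀ z ≥ x, 0 ≤ δ z ∧ δ z < 1) (hzm : Monotone z) (hz0 : x ≤ z 0) (hU : 0 ≤ U) :
    IntervalIntegrable (fun s => 1 - δ (z s)) volume 0 U :=
  intervalIntegrable_const.sub
    (intervalIntegrable_comp_of_monotoneOn hδmeas hδ (hzm.monotoneOn _) hz0 hU (by simp))

theorem isTaxODESolution_piecewise (hδmeas : Measurable δ) (hδ : ∀ z ≥ x, 0 ≤ δ z ∧ δ z < 1)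
    {w : ℝ → ℝ} (hU : 0 ≤ U) (hzm : Monotone z)
    (hz : ∀ u ∈ Icc 0 U, z u = x + ∫ s in (0:ℝ)..u, (1 - δ (z s)))
    (hw : IsTaxODESolution δ (z U) w) :
    IsTaxODESolution δ x (fun s => if s ≤ U then z s else w (s - U)) := by
  set p := fun s => if s ≤ U then z s else w (s - U)
  have hz0 : z 0 = x := by simpa using hz 0 ⟨le_rfl, hU⟩
  have hxzU : x ≤ z U := hz0 ▸ hzm hU
  have hδw : ∀ r ≥ z U, 0 ≤ δ r ∧ δ r < 1 := fun r hr => hδ r (hxzU.trans hr)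
  have hzint := intervalIntegrable_one_sub_comp_of_monotone hδmeas hδ hzm hz0.ge hU
  have hpz : EqOn (fun s => 1 - δ (p s)) (fun s => 1 - δ (z s)) (uIcc 0 U) := fun s hs => by
    rw [uIcc_of_le hU] at hs
    simp only [p, if_pos hs.2]
  intro s hs
  rcases le_or_gt s U with hsU | hUs
  · refine ⟨by simpa only [p, if_pos hsU] using hz0 ▸ hzm hs, ?_⟩
    rw [intervalIntegral.integral_congr (hpz.mono (uIcc_subset_uIcc_left (mem_uIcc_of_le hs hsU)))]
    simpa only [p, if_pos hsU] using hz s ⟨hs, hsU⟩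
  have hpw : EqOn (fun s => 1 - δ (p s)) (fun s => 1 - δ (w (s - U))) (uIcc U s) := fun r hr => by
    rw [uIcc_of_le hUs.le] at hr
    rcases hr.1.eq_or_lt with rfl | hr'
    · simp [p, (hw 0 le_rfl).2]
    · simp only [p, if_neg (not_le.2 hr')]
  have hwint : IntervalIntegrable (fun r => 1 - δ (w (r - U))) volume U s := by
    simpa using (hw.intervalIntegrable hδw (sub_nonneg.2 hUs.le)).comp_sub_right U
  have hps : p s = w (s - U) := if_neg (not_le.2 hUs)
  rw [hps]
  refine ⟨hxzU.trans (hw _ (sub_nonneg.2 hUs.le)).1, ?_⟩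
  rw [← intervalIntegral.integral_add_adjacent_intervals
    (hzint.congr (hpz.symm.mono uIoc_subset_uIcc)) (hwint.congr (hpw.symm.mono uIoc_subset_uIcc)),
    intervalIntegral.integral_congr hpz,
    intervalIntegral.integral_congr hpw, intervalIntegral.integral_comp_sub_right
      (fun r => 1 - δ (w r)), sub_self, ← add_assoc, ← hz U ⟨hU, le_rfl⟩]
  exact (hw _ (sub_nonneg.2 hUs.le)).2

theorem IsTaxODESolution.eqOn_of_lt (hy : IsTaxODESolution δ x y) (hδmeas : Measurable δ)
    (hδ : ∀ z ≥ x, 0 ≤ δ z ∧ δ z < 1) (hyuniq : ∀ w, IsTaxODESolution δ x w → ∀ t ≥ 0, w t = y t)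
    {yinf : ℝ} (hyinf : Tendsto y atTop (𝓝 yinf)) (hzm : Monotone z)
    (hz : ∀ u ∈ Icc 0 U, z u = x + ∫ s in (0:ℝ)..u, (1 - δ (z s))) (hzU : z U < yinf) :
    EqOn z y (Icc 0 U) := by
  rintro u ⟨hu0, huU⟩
  have hU := hu0.trans huU
  have hz0 : z 0 = x := by simpa using hz 0 ⟨le_rfl, hU⟩
  obtain ⟨c, hc, hyc⟩ := hy.exists_eq hδ hyinf (hz0 ▸ hzm hU) hzU
  -- continue `z` after time `U` by the solution started from `y c = z U`
  have := hyuniq _ (isTaxODESolution_piecewise hδmeas hδ hU hzm hz (hyc ▸ hy.comp_add_right hδ hc))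
    u hu0
  simpa only [if_pos huU] using this

theorem IsTaxODESolution.eqOn (hy : IsTaxODESolution δ x y) (hδmeas : Measurable δ)
    (hδ : ∀ z ≥ x, 0 ≤ δ z ∧ δ z < 1) (hyuniq : ∀ w, IsTaxODESolution δ x w → ∀ t ≥ 0, w t = y t)
    {yinf : ℝ} (hyinf : Tendsto y atTop (𝓝 yinf)) (hzm : Monotone z)
    (hz : ∀ u ∈ Icc 0 U, z u = x + ∫ s in (0:ℝ)..u, (1 - δ (z s))) : EqOn z y (Icc 0 U) := by
  intro u hu
  have hU : 0 ≤ U := hu.1.trans hu.2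
  refine hy.eqOn_of_lt hδmeas hδ hyuniq hyinf hzm hz (not_le.1 fun hzU => ?_) hu
  -- otherwise `z` reaches `(y U + yinf) / 2 > y U` at some `v ≤ U`, where it must agree with `y`
  have hyU := hy.lt_of_tendsto hδ hyinf hU
  have hz0 : z 0 = x := by simpa using hz 0 ⟨le_rfl, hU⟩
  obtain ⟨v, hv, hzv⟩ := intermediate_value_Icc hU (continuousOn_of_eq_add_integral hU hz
    (intervalIntegrable_one_sub_comp_of_monotone hδmeas hδ hzm hz0.ge hU))
    (show (y U + yinf) / 2 ∈ Icc (z 0) (z U) by constructor <;> linarith [(hy U hU).1])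
  have hyv := hy.eqOn_of_lt hδmeas hδ hyuniq hyinf hzm (fun w hw => hz w ⟨hw.1, hw.2.trans hv.2⟩)
    (by linarith) ⟨hv.1, le_rfl⟩
  linarith [(hy.strictMonoOn hδ).monotoneOn hv.1 hU hv.2]

end ODE

theorem exists_monotone_eqOn_comp {F g : ℝ → ℝ} {a b : ℝ} (hab : a ≤ b) (hFm : Monotone F)
    (hF : ContinuousOn F (Icc a b))
    (hg : ∀ s ∈ Icc a b, ∀ s' ∈ Icc a b, F s ≤ F s' → g s ≤ g s') :
    ∃ h : ℝ → ℝ, Monotone h ∧ EqOn g (h ∘ F) (Icc a b) := by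
  set T := fun v => invFunOn F (Icc a b) (max (F a) (min v (F b)))
  have hT : ∀ v, T v ∈ Icc a b ∧ F (T v) = max (F a) (min v (F b)) := fun v =>
    have h := intermediate_value_Icc hab hF
      ⟨le_max_left _ _, max_le (hFm hab) (min_le_right _ _)⟩
    ⟨invFunOn_mem h, invFunOn_eq h⟩
  refine ⟨g ∘ T, fun v v' hvv' => hg _ (hT v).1 _ (hT v').1 ?_, fun s hs => ?_⟩
  · rw [(hT v).2, (hT v').2]
    exact max_le_max le_rfl (min_le_min hvv' le_rfl)
  · have hFs : F (T (F s)) = F s := by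
      rw [(hT _).2, min_eq_left (hFm hs.2), max_eq_right (hFm hs.1)]
    exact le_antisymm (hg _ hs _ (hT _).1 hFs.ge) (hg _ (hT _).1 _ hs hFs.le)

theorem exists_ode_solution_of_eq_sub_integral (F : StieltjesFunction ℝ) {δ g : ℝ → ℝ} {x : ℝ}
    (hδmeas : Measurable δ) (hδ : ∀ z ≥ x, 0 ≤ δ z ∧ δ z < 1) (hF : ContinuousOn F (Ici 0))
    (hF0 : F 0 = x) (hgm : MonotoneOn g (Ici 0))
    (hg : ∀ t ≥ (0:ℝ), g t = F t - ∫ s in Ioc 0 t, δ (g s) ∂F.measure) {t : ℝ} (ht : 0 ≤ t) :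
    ∃ z : ℝ → ℝ, Monotone z ∧
      (∀ u ∈ Icc 0 (F t - x), z u = x + ∫ w in (0:ℝ)..u, (1 - δ (z w))) ∧ g t = z (F t - x) := by
  have hg0 : g 0 = x := by simpa [hF0] using hg 0 le_rfl
  obtain ⟨h, hhm, hgh⟩ : ∃ h : ℝ → ℝ, Monotone h ∧ EqOn g (h ∘ F) (Icc 0 t) := by
    refine exists_monotone_eqOn_comp ht F.mono (hF.mono Icc_subset_Ici_self)
      fun s hs s' hs' hFss' => (le_total s s').elim (hgm hs.1 hs'.1) fun hs's => le_of_eq ?_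
    have hF' : F s = F s' := le_antisymm hFss' (F.mono hs's)
    have := integral_Ioc_sub_integral_Ioc_mem_Icc F hδmeas hδ hgm hg0.ge hs'.1 hs's
    rw [hF', sub_self] at this
    rw [hg s hs.1, hg s' hs'.1, hF']
    linarith [this.1, this.2]
  have hzm : Monotone fun u => h (x + u) := fun a b hab => hhm (by linarith)
  have hz0 : h (x + 0) = x := by
    rw [add_zero, ← hF0]
    exact (hgh ⟨le_rfl, ht⟩).symm.trans (hg0.trans hF0.symm)
  refine ⟨fun u => h (x + u), hzm, fun u hu => ?_, by simpa using hgh ⟨ht, le_rfl⟩⟩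
  obtain ⟨s, hs, hFs⟩ := intermediate_value_Icc ht (hF.mono Icc_subset_Ici_self)
    (show x + u ∈ Icc (F 0) (F t) by constructor <;> linarith [hu.1, hu.2])
  have hcomp : ∫ r in Ioc 0 s, δ (g r) ∂F.measure = ∫ w in (0:ℝ)..u, δ (h (x + w)) :=
    calc ∫ r in Ioc 0 s, δ (g r) ∂F.measure = ∫ r in Ioc 0 s, (δ ∘ h) (F r) ∂F.measure :=
          setIntegral_congr_fun measurableSet_Ioc fun r hr =>
            congrArg δ (hgh ⟨hr.1.le, hr.2.trans hs.2⟩)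
      _ = ∫ v in Ioc x (x + u), δ (h v) := by
          rw [F.setIntegral_comp hs.1 (hF.mono (Icc_subset_Icc_right hs.2 |>.trans
            Icc_subset_Ici_self)) (hδmeas.comp hhm.measurable), hF0, hFs]
          rfl
      _ = ∫ w in (0:ℝ)..u, δ (h (x + w)) := by
          rw [intervalIntegral.integral_comp_add_left (fun v => δ (h v)), add_zero,
            intervalIntegral.integral_of_le (by linarith [hu.1])]
  have hδz := intervalIntegrable_comp_of_monotoneOn hδmeas hδ (hzm.monotoneOn _) hz0.ge hu.1
    (μ := volume) (by simp)
  show h (x + u) = x + ∫ w in (0:ℝ)..u, (1 - δ (h (x + w)))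
  rw [intervalIntegral.integral_sub intervalIntegrable_const hδz, intervalIntegral.integral_const,
    smul_eq_mul, mul_one, sub_zero, ← hcomp, ← hFs]
  have hgs : g s = h (F s) := hgh hs
  linarith [hg s hs.1]

theorem natural_tax_bounded_by_ode_limit
    (x : ℝ) (X : ℝ → ℝ)
    (hX0 : X 0 = x)
    (hrc : ∀ t ≥ (0:ℝ), ContinuousWithinAt X (Set.Ici t) t)
    (hll : ∀ t > (0:ℝ), ∃ l : ℝ, Tendsto X (nhdsWithin t (Set.Iio t)) (nhds l))
    (hnuj : ∀ t > (0:ℝ), ∀ l : ℝ,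
      Tendsto X (nhdsWithin t (Set.Iio t)) (nhds l) → X t ≤ l)
    (F : StieltjesFunction ℝ) (hF : ∀ t ≥ (0:ℝ), F t = runMax X t)
    (δ : ℝ → ℝ) (hδmeas : Measurable δ)
    (hδ : ∀ z ≥ x, 0 ≤ δ z ∧ δ z < 1)
    (y : ℝ → ℝ)
    (hyrange : ∀ t ≥ (0:ℝ), x ≤ y t)
    (hy : ∀ t ≥ (0:ℝ), y t = x + ∫ s in (0:ℝ)..t, (1 - δ (y s)))
    (hyuniq : ∀ z : ℝ → ℝ, (∀ t ≥ (0:ℝ), x ≤ z t) →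
      (∀ t ≥ (0:ℝ), z t = x + ∫ s in (0:ℝ)..t, (1 - δ (z s))) →
      ∀ t ≥ (0:ℝ), z t = y t)
    -- y_x(∞) < ∞ : y has a finite limit at infinity
    (yinf : ℝ) (hyinf : Tendsto y atTop (nhds yinf))
    -- V is the natural tax process with rate δ:
    (V : ℝ → ℝ)
    (hV : ∀ t ≥ (0:ℝ), V t = X t - ∫ s in Set.Ioc 0 t, δ (runMax V s) ∂F.measure) :
    (∀ t ≥ (0:ℝ), runMax V t = y (runMax X t - x) ∧ runMax V t < yinf) ∧
    -- for a ≥ y_x(∞), the first passage time above a is infinite: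
    (∀ a : ℝ, yinf ≤ a → {t : ℝ | 0 ≤ t ∧ a < V t} = ∅) := by
  have hXbdd := bddAbove_image_Icc_of_cadlag hrc hll
  have hFc := F.continuousOn_Ici_of_eq_runMax hF hXbdd hll hnuj
  have hF0 : F 0 = x := by rw [hF 0 le_rfl, runMax_zero, hX0]
  have hVbdd := bddAbove_image_Icc_of_eq_sub_integral F hXbdd (fun z hz => (hδ z (hX0 ▸ hz)).1) hV
  have hVm := monotoneOn_runMax hVbdd
  have hV0 : x ≤ runMax V 0 := by simp [runMax_zero, hV 0 le_rfl, hX0]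
  have hVbar : ∀ t ≥ (0:ℝ), runMax V t = F t - ∫ s in Ioc 0 t, δ (runMax V s) ∂F.measure :=
    fun t ht => by
      rw [hF t ht]
      refine runMax_sub_eq ht hXbdd (fun r hr => hV r hr.1) fun r hr => ?_
      rw [← hF t ht, ← hF r hr.1]
      exact integral_Ioc_sub_integral_Ioc_mem_Icc F hδmeas hδ hVm hV0 hr.1 hr.2
  have hys : IsTaxODESolution δ x y := fun t ht => ⟨hyrange t ht, hy t ht⟩
  have hVy : ∀ t ≥ (0:ℝ), runMax V t = y (runMax X t - x) := fun t ht => by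
    obtain ⟨z, hzm, hz, hVz⟩ :=
      exists_ode_solution_of_eq_sub_integral F hδmeas hδ hFc hF0 hVm hVbar ht
    rw [hVz, ← hF t ht]
    exact hys.eqOn hδmeas hδ
      (fun w hw => hyuniq w (fun t ht => (hw t ht).1) fun t ht => (hw t ht).2)
      hyinf hzm hz ⟨sub_nonneg.2 (hF0 ▸ F.mono ht), le_rfl⟩
  have hVlt : ∀ t ≥ (0:ℝ), runMax V t < yinf := fun t ht =>
    hVy t ht ▸ hys.lt_of_tendsto hδ hyinf (sub_nonneg.2 (hX0 ▸ le_runMax (hXbdd t) ⟨le_rfl, ht⟩))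
  refine ⟨fun t ht => ⟨hVy t ht, hVlt t ht⟩, fun a ha => eq_empty_of_forall_notMem ?_⟩
  rintro t ⟨ht, hat⟩
  linarith [le_runMax (hVbdd t) ⟨ht, le_rfl⟩, hVlt t ht]
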